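/- Let X be an n×n positive semidefinite matrix, Y an n×n positive definite matrix with largest eigenvalue λ_max and smallest eigenvalue λ_min, and P, T Hermitian with 0 ≤ P ≤ I and 0 ≤ T ≤ I. Then |Tr(P [T X, ln Y − (ln λ_min)·I])| ≤ 4 · Tr(X) · ln(λ_max/λ_min). -/

import Mathlib

open Matrix Kronecker
open scoped ComplexOrder

/-- Operator norm of a complex matrix: the norm of the induced operator on Euclidean space. -/
noncomputable def opNorm {n : Type*} [Fintype n] [DecidableEq n]
    (A : Matrix n n ℂ) : ℝ :=
  ‖Matrix.toEuclideanCLM (𝕜 := ℂ) A‖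

/-- Matrix logarithm of a Hermitian matrix, defined by functional calculus via the spectral
decomposition (and as `0` on non-Hermitian matrices).  Since `Real.log 0 = 0`, on a positive
semidefinite matrix this is the logarithm on the support. -/
noncomputable def mlog {n : Type*} [Fintype n] [DecidableEq n]
    (A : Matrix n n ℂ) : Matrix n n ℂ :=
  if hA : A.IsHermitian then
    (hA.eigenvectorUnitary : Matrix n n ℂ) *
      Matrix.diagonal (fun i => (Real.log (hA.eigenvalues i) : ℂ)) *
      (star (hA.eigenvectorUnitary : Matrix n n ℂ))
  else 0

/-- The Lindblad generator `𝓛(ρ) = -i[H,ρ] + Σ_α (L_α ρ L_α† - ½ L_α† L_α ρ - ½ ρ L_α† L_α)`. -/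
noncomputable def lindblad {n : Type*} [Fintype n] {ι : Type*} [Fintype ι]
    (H : Matrix n n ℂ) (L : ι → Matrix n n ℂ) (ρ : Matrix n n ℂ) : Matrix n n ℂ :=
  -(Complex.I) • (H * ρ - ρ * H) +
    ∑ α, (L α * ρ * (L α)ᴴ - (2:ℂ)⁻¹ • ((L α)ᴴ * (L α) * ρ) - (2:ℂ)⁻¹ • (ρ * (L α)ᴴ * (L α)))

/-- Partial trace over the second tensor factor. -/
noncomputable def ptraceR {m p : Type*} [Fintype p]
    (ρ : Matrix (m × p) (m × p) ℂ) : Matrix m m ℂ :=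
  Matrix.of fun i j => ∑ b, ρ (i, b) (j, b)

/-- Partial trace over the first tensor factor. -/
noncomputable def ptraceL {m p : Type*} [Fintype m]
    (ρ : Matrix (m × p) (m × p) ℂ) : Matrix p p ℂ :=
  Matrix.of fun i j => ∑ a, ρ (a, i) (a, j)

/-- A density matrix: positive semidefinite with trace one. -/
noncomputable def IsDensityMatrix {n : Type*} [Fintype n] (ρ : Matrix n n ℂ) : Prop :=
  ρ.PosSemidef ∧ ρ.trace = 1

/-- Von Neumann entropy `S(ρ) = -Tr(ρ ln ρ) = -Σ_i λ_i ln λ_i` (with `0 ln 0 = 0`). -/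
noncomputable def vNEntropy {n : Type*} [Fintype n] [DecidableEq n]
    (ρ : Matrix n n ℂ) : ℝ :=
  if h : ρ.IsHermitian then -∑ i, (h.eigenvalues i) * Real.log (h.eigenvalues i) else 0

namespace TraceCommAux

variable {n : ℕ}

/-- Euclidean norm of a complex vector. -/
noncomputable def nrm (v : Fin n → ℂ) : ℝ := ‖(WithLp.equiv 2 (Fin n → ℂ)).symm v‖

lemma nrm_nonneg (v : Fin n → ℂ) : 0 ≤ nrm v := norm_nonneg _

lemma dot_self_re (v : Fin n → ℂ) : (dotProduct (star v) v).re = nrm v ^ 2 := by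
  have h := EuclideanSpace.inner_eq_star_dotProduct (𝕜 := ℂ)
      ((WithLp.equiv 2 (Fin n → ℂ)).symm v) ((WithLp.equiv 2 (Fin n → ℂ)).symm v)
  rw [inner_self_eq_norm_sq_to_K] at h
  rw [dotProduct_comm] at h
  simp only [WithLp.equiv_symm_apply, WithLp.ofLp_toLp] at h
  rw [← h]
  norm_cast

lemma abs_dot_le (v w : Fin n → ℂ) :
    ‖dotProduct (star v) w‖ ≤ nrm v * nrm w := by
  have h := norm_inner_le_norm (𝕜 := ℂ)
      ((WithLp.equiv 2 (Fin n → ℂ)).symm v) ((WithLp.equiv 2 (Fin n → ℂ)).symm w)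
  rw [EuclideanSpace.inner_eq_star_dotProduct] at h
  simpa [nrm, dotProduct_comm] using h

lemma psd_re_le {A B : Matrix (Fin n) (Fin n) ℂ} (h : (B - A).PosSemidef) (v : Fin n → ℂ) :
    (dotProduct (star v) (A *ᵥ v)).re ≤ (dotProduct (star v) (B *ᵥ v)).re := by
  have h2 := h.re_dotProduct_nonneg v
  rw [Matrix.sub_mulVec, dotProduct_sub] at h2
  simp only [RCLike.re_to_complex, Complex.sub_re] at h2
  linarith

lemma psd_smul {k : ℝ} (hk : 0 ≤ k) {A : Matrix (Fin n) (Fin n) ℂ} (hA : A.PosSemidef) :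
    ((k : ℂ) • A).PosSemidef := by
  refine Matrix.PosSemidef.of_dotProduct_mulVec_nonneg ?_ (fun v => ?_)
  · unfold Matrix.IsHermitian
    rw [Matrix.conjTranspose_smul, hA.1.eq]
    norm_num
  · rw [Matrix.smul_mulVec, dotProduct_smul, smul_eq_mul]
    have := hA.dotProduct_mulVec_nonneg v
    rw [Complex.le_def] at this ⊢
    constructor
    · simp only [Complex.zero_re, Complex.mul_re, Complex.ofReal_re, Complex.ofReal_im,
        zero_mul, sub_zero] at *
      exact mul_nonneg hk (by simpa using this.1)
    · simp only [Complex.zero_im, Complex.mul_im, Complex.ofReal_re, Complex.ofReal_im,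
        zero_mul, add_zero] at *
      rw [← this.2]; ring

end TraceCommAux

namespace TraceCommAux

lemma sq_psd {M : Matrix (Fin n) (Fin n) ℂ} {k : ℝ} (hM : M.PosSemidef) (hk : 0 ≤ k)
    (h2 : (((k : ℝ) : ℂ) • 1 - M).PosSemidef) :
    ((((k ^ 2 : ℝ)) : ℂ) • 1 - M * M).PosSemidef := by
  obtain ⟨S, hSh, hSS⟩ : ∃ S : Matrix (Fin n) (Fin n) ℂ, Sᴴ = S ∧ S * S = M :=
    by open scoped MatrixOrder in exact ⟨CFC.sqrt M, (CFC.sqrt_nonneg M).posSemidef.isHermitian, CFC.sqrt_mul_sqrt_self M hM.nonneg⟩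
  have h1 : ((k : ℂ) • M - M * M).PosSemidef := by
    have h := h2.mul_mul_conjTranspose_same S
    have e : S * (((k : ℝ) : ℂ) • 1 - M) * Sᴴ = (k : ℂ) • M - M * M := by
      rw [hSh, ← hSS]
      noncomm_ring
    rwa [e] at h
  have h3 : ((((k ^ 2 : ℝ)) : ℂ) • (1 : Matrix (Fin n) (Fin n) ℂ) - (k : ℂ) • M).PosSemidef := by
    have h := psd_smul hk h2
    have e : (k : ℂ) • (((k : ℝ) : ℂ) • (1 : Matrix (Fin n) (Fin n) ℂ) - M)
        = (((k ^ 2 : ℝ)) : ℂ) • 1 - (k : ℂ) • M := by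
      rw [smul_sub, smul_smul]
      congr 1
      push_cast
      ring_nf
    rwa [e] at h
  have h4 := h3.add h1
  rwa [sub_add_sub_cancel] at h4

lemma nrm_mulVec_le {M : Matrix (Fin n) (Fin n) ℂ} {k : ℝ} (hM : M.PosSemidef) (hk : 0 ≤ k)
    (h2 : (((k : ℝ) : ℂ) • 1 - M).PosSemidef) (v : Fin n → ℂ) :
    nrm (M *ᵥ v) ≤ k * nrm v := by
  have key : nrm (M *ᵥ v) ^ 2 ≤ (k * nrm v) ^ 2 := by
    have e1 : dotProduct (star (M *ᵥ v)) (M *ᵥ v) = dotProduct (star v) ((M * M) *ᵥ v) := by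
      rw [Matrix.star_mulVec, hM.isHermitian.eq, Matrix.dotProduct_mulVec (star v ᵥ* M),
        Matrix.vecMul_vecMul, ← Matrix.dotProduct_mulVec]
    have e2 := psd_re_le (sq_psd hM hk h2) v
    have e3 : (dotProduct (star v) (((((k ^ 2 : ℝ)) : ℂ) • (1:Matrix (Fin n) (Fin n) ℂ)) *ᵥ v)).re
        = k ^ 2 * nrm v ^ 2 := by
      rw [Matrix.smul_mulVec, Matrix.one_mulVec, dotProduct_smul, smul_eq_mul]
      rw [Complex.mul_re]
      simp [← Complex.ofReal_pow, dot_self_re]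
    rw [← dot_self_re, e1]
    calc (dotProduct (star v) ((M * M) *ᵥ v)).re
        ≤ (dotProduct (star v) (((((k ^ 2 : ℝ)) : ℂ) • (1:Matrix (Fin n) (Fin n) ℂ)) *ᵥ v)).re := e2
      _ = k ^ 2 * nrm v ^ 2 := e3
      _ = (k * nrm v) ^ 2 := by ring
  have h0 : 0 ≤ k * nrm v := mul_nonneg hk (nrm_nonneg v)
  nlinarith [nrm_nonneg (M *ᵥ v)]

lemma herm_dot {M : Matrix (Fin n) (Fin n) ℂ} (hM : M.IsHermitian) (v w : Fin n → ℂ) :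
    dotProduct (star v) (M *ᵥ w) = dotProduct (star (M *ᵥ v)) w := by
  rw [Matrix.star_mulVec, hM.eq, ← Matrix.dotProduct_mulVec]

end TraceCommAux

namespace TraceCommAux

lemma abs_trace_mul_le {A X : Matrix (Fin n) (Fin n) ℂ} (hX : X.PosSemidef) {K : ℝ}
    (hA : ∀ v : Fin n → ℂ, ‖dotProduct (star v) (A *ᵥ v)‖ ≤ K * nrm v ^ 2) :
    ‖(A * X).trace‖ ≤ K * X.trace.re := by
  obtain ⟨S, hSh, hSS⟩ : ∃ S : Matrix (Fin n) (Fin n) ℂ, Sᴴ = S ∧ S * S = X :=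
    by open scoped MatrixOrder in exact ⟨CFC.sqrt X, (CFC.sqrt_nonneg X).posSemidef.isHermitian, CFC.sqrt_mul_sqrt_self X hX.nonneg⟩
  have hconj : ∀ i j, star (S j i) = S i j := by
    intro i j
    have := congrFun (congrFun hSh i) j
    simpa [Matrix.conjTranspose_apply] using this
  have ht : (A * X).trace = ∑ i, dotProduct (star (fun j => S j i)) (A *ᵥ (fun j => S j i)) := by
    rw [← hSS, ← mul_assoc, Matrix.trace_mul_comm (A * S) S, Matrix.trace]
    apply Finset.sum_congr rfl
    intro i _
    rw [Matrix.diag_apply, Matrix.mul_apply]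
    apply Finset.sum_congr rfl
    intro j _
    simp only [Pi.star_apply, hconj i j, Matrix.mulVec, dotProduct, Matrix.mul_apply]
  have hX_tr : X.trace.re = ∑ i, nrm (fun j => S j i) ^ 2 := by
    rw [← hSS, Matrix.trace, Complex.re_sum]
    apply Finset.sum_congr rfl
    intro i _
    rw [← dot_self_re]
    congr 1
    rw [Matrix.diag_apply, Matrix.mul_apply]
    apply Finset.sum_congr rfl
    intro j _
    rw [Pi.star_apply, hconj i j]
  rw [ht, hX_tr]
  calc ‖∑ i, dotProduct (star (fun j => S j i)) (A *ᵥ (fun j => S j i))‖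
      ≤ ∑ i, ‖dotProduct (star (fun j => S j i)) (A *ᵥ (fun j => S j i))‖ :=
        norm_sum_le _ _
    _ ≤ ∑ i, K * nrm (fun j => S j i) ^ 2 := Finset.sum_le_sum fun i _ => hA _
    _ = K * ∑ i, nrm (fun j => S j i) ^ 2 := by rw [Finset.mul_sum]

end TraceCommAux

namespace TraceCommAux

lemma smul_one_eq_conj {U : Matrix (Fin n) (Fin n) ℂ} (hU : U * Uᴴ = 1) (r : ℂ) :
    r • (1 : Matrix (Fin n) (Fin n) ℂ) = U * Matrix.diagonal (fun _ => r) * Uᴴ := by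
  rw [← Matrix.smul_one_eq_diagonal, Matrix.mul_smul, mul_one, Matrix.smul_mul, hU]

lemma conj_diag_sub (U : Matrix (Fin n) (Fin n) ℂ) (e f : Fin n → ℂ) :
    U * Matrix.diagonal e * Uᴴ - U * Matrix.diagonal f * Uᴴ
      = U * Matrix.diagonal (e - f) * Uᴴ := by
  have : Matrix.diagonal (e - f) = Matrix.diagonal e - Matrix.diagonal f := by
    rw [Matrix.diagonal_sub]; rfl
  rw [this, Matrix.mul_sub, Matrix.sub_mul]

lemma trace_re_nonneg {X : Matrix (Fin n) (Fin n) ℂ} (hX : X.PosSemidef) : 0 ≤ X.trace.re := by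
  rw [Matrix.trace, Complex.re_sum]
  apply Finset.sum_nonneg
  intro i _
  have h := hX.re_dotProduct_nonneg (Pi.single i 1)
  have e : dotProduct (star (Pi.single i 1)) (X *ᵥ Pi.single i (1:ℂ)) = X i i := by
    simp [dotProduct, Matrix.mulVec, Pi.single_apply, Finset.mul_sum]
  rw [e] at h
  exact h

end TraceCommAux

/-- If `0 ≤ X`, `Y` is positive definite with largest eigenvalue `λ_max` and smallest eigenvalue
`λ_min`, and `0 ≤ P, T ≤ I` are Hermitian, then
`|Tr(P [T X, ln Y - (ln λ_min)·I])| ≤ 4 · Tr(X) · ln(λ_max/λ_min)`. -/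
theorem abs_trace_commutator_shifted_log_le {n : ℕ} (X Y P T : Matrix (Fin n) (Fin n) ℂ)
    (hX : X.PosSemidef) (hY : Y.PosDef)
    (hP : P.IsHermitian) (hP0 : P.PosSemidef)
    (hP1 : ((1 : Matrix (Fin n) (Fin n) ℂ) - P).PosSemidef)
    (hT : T.IsHermitian) (hT0 : T.PosSemidef)
    (hT1 : ((1 : Matrix (Fin n) (Fin n) ℂ) - T).PosSemidef) :
    ‖((P * ((T * X) * (mlog Y - (Real.log (⨅ i, hY.isHermitian.eigenvalues i) : ℂ) • (1 : Matrix (Fin n) (Fin n) ℂ))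
        - (mlog Y - (Real.log (⨅ i, hY.isHermitian.eigenvalues i) : ℂ) • (1 : Matrix (Fin n) (Fin n) ℂ)) * (T * X))).trace)‖ ≤
      4 * X.trace.re *
        Real.log ((⨆ i, hY.isHermitian.eigenvalues i) / (⨅ i, hY.isHermitian.eigenvalues i)) := by
  classical
  open TraceCommAux in
  rcases Nat.eq_zero_or_pos n with hn | hn
  · subst hn
    simp [Matrix.trace]
  · haveI : Nonempty (Fin n) := Fin.pos_iff_nonempty.mp hn
    set eig := hY.isHermitian.eigenvalues with heig
    set lmin := ⨅ i, eig i with hlmin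
    set lmax := ⨆ i, eig i with hlmax
    set U := (hY.isHermitian.eigenvectorUnitary : Matrix (Fin n) (Fin n) ℂ) with hUdef
    have hU : U * Uᴴ = 1 := by
      rw [← Matrix.star_eq_conjTranspose]
      exact Matrix.mem_unitaryGroup_iff.mp hY.isHermitian.eigenvectorUnitary.2
    obtain ⟨i1, hi1⟩ := exists_eq_ciSup_of_finite (f := eig)
    have heigpos : ∀ i, 0 < eig i := fun i => hY.eigenvalues_pos i
    have hmin_le : ∀ i, lmin ≤ eig i := fun i => ciInf_le (Set.finite_range eig).bddBelow i
    have hle_max : ∀ i, eig i ≤ lmax := fun i => le_ciSup (Set.finite_range eig).bddAbove i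
    have hmin_pos : 0 < lmin := by
      obtain ⟨i0, hi0⟩ := exists_eq_ciInf_of_finite (f := eig)
      rw [hlmin, ← hi0]; exact heigpos i0
    have hmax_pos : 0 < lmax := lt_of_lt_of_le (heigpos i1) (hle_max i1)
    set c := Real.log (lmax / lmin) with hcdef
    have hc_eq : c = Real.log lmax - Real.log lmin := Real.log_div hmax_pos.ne' hmin_pos.ne'
    have hminmax : lmin ≤ lmax := le_trans (hmin_le i1) (hle_max i1)
    have hc_nonneg : 0 ≤ c := Real.log_nonneg ((one_le_div hmin_pos).mpr hminmax)
    set d : Fin n → ℝ := fun i => Real.log (eig i) - Real.log lmin with hddef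
    have hd0 : ∀ i, 0 ≤ d i := fun i =>
      sub_nonneg.mpr ((Real.log_le_log_iff hmin_pos (heigpos i)).mpr (hmin_le i))
    have hdc : ∀ i, d i ≤ c := fun i => by
      rw [hc_eq]
      exact sub_le_sub_right ((Real.log_le_log_iff (heigpos i) hmax_pos).mpr (hle_max i)) _
    set L := mlog Y - (Real.log lmin : ℂ) • (1 : Matrix (Fin n) (Fin n) ℂ) with hLdef
    have hL : L = U * Matrix.diagonal (fun i => ((d i : ℝ) : ℂ)) * Uᴴ := by
      rw [hLdef, mlog, dif_pos hY.isHermitian, smul_one_eq_conj hU,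
        Matrix.star_eq_conjTranspose, conj_diag_sub]
      congr 1
      congr 1
      funext i j
      by_cases h : i = j <;>
        simp [Matrix.diagonal_apply, h, hddef, heig, Complex.ofReal_sub]
    have hLpsd : L.PosSemidef := by
      rw [hL]
      exact (Matrix.posSemidef_diagonal_iff.mpr fun i =>
        Complex.zero_le_real.mpr (hd0 i)).mul_mul_conjTranspose_same U
    have hLc : (((c : ℝ) : ℂ) • 1 - L).PosSemidef := by
      rw [hL, smul_one_eq_conj hU, conj_diag_sub]
      have : ((fun _ => ((c:ℝ):ℂ)) - fun i => ((d i : ℝ) : ℂ))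
          = fun i => (((c - d i : ℝ)) : ℂ) := by
        funext i; simp [Complex.ofReal_sub]
      rw [this]
      exact (Matrix.posSemidef_diagonal_iff.mpr fun i =>
        Complex.zero_le_real.mpr (sub_nonneg.mpr (hdc i))).mul_mul_conjTranspose_same U
    have hP1' : (((1:ℝ):ℂ) • 1 - P).PosSemidef := by simpa using hP1
    have hT1' : (((1:ℝ):ℂ) • 1 - T).PosSemidef := by simpa using hT1
    have hnP : ∀ v, nrm (P *ᵥ v) ≤ nrm v := fun v => by
      simpa using nrm_mulVec_le hP0 zero_le_one hP1' v
    have hnT : ∀ v, nrm (T *ᵥ v) ≤ nrm v := fun v => by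
      simpa using nrm_mulVec_le hT0 zero_le_one hT1' v
    have hnL : ∀ v, nrm (L *ᵥ v) ≤ c * nrm v := fun v => nrm_mulVec_le hLpsd hc_nonneg hLc v
    have hA1 : ∀ v : Fin n → ℂ,
        ‖dotProduct (star v) ((L * P * T) *ᵥ v)‖ ≤ c * nrm v ^ 2 := by
      intro v
      have e : (L * P * T) *ᵥ v = L *ᵥ (P *ᵥ (T *ᵥ v)) := by
        rw [Matrix.mulVec_mulVec, Matrix.mulVec_mulVec]
      rw [e, herm_dot hLpsd.isHermitian]
      calc ‖dotProduct (star (L *ᵥ v)) (P *ᵥ (T *ᵥ v))‖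
          ≤ nrm (L *ᵥ v) * nrm (P *ᵥ (T *ᵥ v)) := abs_dot_le _ _
        _ ≤ (c * nrm v) * nrm v := by
            apply mul_le_mul (hnL v) (le_trans (hnP _) (hnT v)) (nrm_nonneg _)
              (mul_nonneg hc_nonneg (nrm_nonneg v))
        _ = c * nrm v ^ 2 := by ring
    have hA2 : ∀ v : Fin n → ℂ,
        ‖dotProduct (star v) ((P * L * T) *ᵥ v)‖ ≤ c * nrm v ^ 2 := by
      intro v
      have e : (P * L * T) *ᵥ v = P *ᵥ (L *ᵥ (T *ᵥ v)) := by
        rw [Matrix.mulVec_mulVec, Matrix.mulVec_mulVec]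
      rw [e, herm_dot hP0.isHermitian]
      calc ‖dotProduct (star (P *ᵥ v)) (L *ᵥ (T *ᵥ v))‖
          ≤ nrm (P *ᵥ v) * nrm (L *ᵥ (T *ᵥ v)) := abs_dot_le _ _
        _ ≤ nrm v * (c * nrm v) := by
            apply mul_le_mul (hnP v) (le_trans (hnL _) ?_) (nrm_nonneg _) (nrm_nonneg v)
            exact mul_le_mul_of_nonneg_left (hnT v) hc_nonneg
        _ = c * nrm v ^ 2 := by ring
    have h1 := abs_trace_mul_le hX hA1
    have h2 := abs_trace_mul_le hX hA2
    have htr : 0 ≤ X.trace.re := trace_re_nonneg hX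
    have hsplit : (P * ((T * X) * L - L * (T * X))).trace
        = ((L * P * T) * X).trace - ((P * L * T) * X).trace := by
      rw [Matrix.mul_sub, Matrix.trace_sub]
      congr 1
      · rw [show P * ((T * X) * L) = (P * (T * X)) * L by noncomm_ring,
          Matrix.trace_mul_comm]
        congr 1
        noncomm_ring
      · congr 1
        noncomm_ring
    rw [hsplit]
    calc ‖((L * P * T) * X).trace - ((P * L * T) * X).trace‖
        ≤ ‖((L * P * T) * X).trace‖ + ‖((P * L * T) * X).trace‖ :=
          norm_sub_le _ _
      _ ≤ c * X.trace.re + c * X.trace.re := add_le_add h1 h2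
      _ ≤ 4 * X.trace.re * c := by nlinarith
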